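/- arXiv:0906.4760 — 6 statements merged into one kernel-verified Lean document; each statement's English description precedes it below -/
import Mathlib

section
/- A bipartite system P_{XY|UV} on finite alphabets is local if and only if there exist jointly distributed random variables X_u (for each u in 𝒰) and Y_v (for each v in 𝒱) such that for every pair (u,v) the joint marginal of (X_u, Y_v) equals P(·,·|U=u,V=v). Equivalently: P is local iff there exists a probability distribution Q on the set of pairs of functions (α : 𝒰 → 𝒳, β : 𝒱 → 𝒴) such that for all u, v, x, y one has Σ_{(α,β) : α(u)=x, β(v)=y} Q(α,β) = P(x,y|u,v). -/
open Finset

/-- A system `P` is local if it can be written as a convex combination of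
products of conditional distributions for Alice and Bob. -/
def IsLocal {X Y U V : Type} [Fintype X] [Fintype Y]
    (P : X → Y → U → V → ℝ) : Prop :=
  ∃ (m : ℕ) (w : Fin m → ℝ) (A : Fin m → U → X → ℝ) (B : Fin m → V → Y → ℝ),
    (∀ i, 0 ≤ w i) ∧ (∑ i, w i = 1) ∧
    (∀ i u x, 0 ≤ A i u x) ∧ (∀ i u, ∑ x, A i u x = 1) ∧
    (∀ i v y, 0 ≤ B i v y) ∧ (∀ i v, ∑ y, B i v y = 1) ∧
    (∀ x y u v, P x y u v = ∑ i, w i * (A i u x * B i v y))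

lemma sum_prod_filter_eq {U X : Type} [Fintype U] [Fintype X] [DecidableEq U] [DecidableEq X]
    (f : U → X → ℝ) (hf : ∀ u, ∑ x, f u x = 1) (u : U) (x : X) :
    ∑ α ∈ univ.filter (fun α : U → X => α u = x), ∏ u', f u' (α u') = f u x := by
  classical
  rw [Finset.sum_filter]
  set g : U → X → ℝ := fun u' x' => if u' = u then (if x' = x then f u x' else 0) else f u' x'
    with hg
  have h1 : ∀ α : U → X, (if α u = x then ∏ u', f u' (α u') else 0) = ∏ u', g u' (α u') := by
    intro α
    by_cases h : α u = x
    · rw [if_pos h]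
      refine Finset.prod_congr rfl fun u' _ => ?_
      simp only [hg]
      by_cases hu : u' = u
      · subst hu; rw [if_pos rfl, if_pos h]
      · rw [if_neg hu]
    · rw [if_neg h]
      symm
      refine Finset.prod_eq_zero (Finset.mem_univ u) ?_
      simp only [hg, if_pos rfl, if_neg h]
  simp_rw [h1]
  have h2 : ∑ α : U → X, ∏ u', g u' (α u') = ∏ u', ∑ x', g u' x' := by
    rw [Finset.prod_univ_sum, Fintype.piFinset_univ]
  rw [h2]
  rw [Finset.prod_eq_single u]
  · simp [hg]
  · intro u' _ hu'
    simp only [hg, if_neg hu']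
    exact hf u'
  · intro h; exact absurd (Finset.mem_univ u) h

/-- A bipartite system `P(x,y|u,v)` on finite alphabets is local if and only if there
is a probability distribution `Q` on pairs of functions `(α : U → X, β : V → Y)`
("pre-selected outputs to all alternative inputs") whose marginals reproduce `P`. -/
theorem local_iff_realism {X Y U V : Type} [Fintype X] [Fintype Y] [Fintype U] [Fintype V]
    [DecidableEq X] [DecidableEq Y] [DecidableEq U] [DecidableEq V]
    (P : X → Y → U → V → ℝ)
    (hnonneg : ∀ x y u v, 0 ≤ P x y u v)
    (hnorm : ∀ u v, ∑ x, ∑ y, P x y u v = 1) :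
    IsLocal P ↔
      ∃ Q : (U → X) × (V → Y) → ℝ,
        (∀ ab, 0 ≤ Q ab) ∧ (∑ ab, Q ab = 1) ∧
        ∀ u v x y,
          (∑ ab ∈ univ.filter (fun ab : (U → X) × (V → Y) => ab.1 u = x ∧ ab.2 v = y), Q ab)
            = P x y u v := by
  constructor
  · rintro ⟨m, w, A, B, hw, hw1, hA, hA1, hB, hB1, hP⟩
    refine ⟨fun ab => ∑ i, w i * ((∏ u, A i u (ab.1 u)) * (∏ v, B i v (ab.2 v))), ?_, ?_, ?_⟩
    · intro ab
      refine Finset.sum_nonneg fun i _ => mul_nonneg (hw i) (mul_nonneg ?_ ?_)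
      · exact Finset.prod_nonneg fun u _ => hA i u _
      · exact Finset.prod_nonneg fun v _ => hB i v _
    · rw [Finset.sum_comm]
      rw [show (1:ℝ) = ∑ i, w i from hw1.symm]
      refine Finset.sum_congr rfl fun i _ => ?_
      rw [← Finset.mul_sum]
      have : ∑ ab : (U → X) × (V → Y), (∏ u, A i u (ab.1 u)) * (∏ v, B i v (ab.2 v))
          = (∑ α : U → X, ∏ u, A i u (α u)) * (∑ β : V → Y, ∏ v, B i v (β v)) := by
        rw [Finset.sum_mul_sum, ← Finset.univ_product_univ, Finset.sum_product]
      rw [this]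
      have ha : ∑ α : U → X, ∏ u, A i u (α u) = 1 := by
        rw [← Fintype.piFinset_univ, ← Finset.prod_univ_sum]
        simp [hA1 i]
      have hb : ∑ β : V → Y, ∏ v, B i v (β v) = 1 := by
        rw [← Fintype.piFinset_univ, ← Finset.prod_univ_sum]
        simp [hB1 i]
      rw [ha, hb, mul_one, mul_one]
    · intro u v x y
      have hfilt : (univ.filter (fun ab : (U → X) × (V → Y) => ab.1 u = x ∧ ab.2 v = y))
          = (univ.filter (fun α : U → X => α u = x)) ×ˢ
            (univ.filter (fun β : V → Y => β v = y)) := by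
        ext ab
        simp [Finset.mem_product, and_comm]
      rw [hfilt, Finset.sum_product, hP x y u v]
      refine Eq.trans (Finset.sum_congr rfl fun α _ => Finset.sum_comm)
        (Eq.trans Finset.sum_comm ?_)
      refine Finset.sum_congr rfl fun i _ => ?_
      rw [← sum_prod_filter_eq (A i) (hA1 i) u x, ← sum_prod_filter_eq (B i) (hB1 i) v y,
          Finset.sum_mul_sum, Finset.mul_sum]
      refine Finset.sum_congr rfl fun α _ => ?_
      rw [Finset.mul_sum]
  · rintro ⟨Q, hQ0, hQ1, hQm⟩
    refine ⟨Fintype.card ((U → X) × (V → Y)),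
      fun i => Q ((Fintype.equivFin _).symm i),
      fun i u x => if ((Fintype.equivFin ((U → X) × (V → Y))).symm i).1 u = x then 1 else 0,
      fun i v y => if ((Fintype.equivFin ((U → X) × (V → Y))).symm i).2 v = y then 1 else 0,
      fun i => hQ0 _, ?_, ?_, ?_, ?_, ?_, ?_⟩
    · rw [← hQ1]; exact Fintype.sum_equiv (Fintype.equivFin _).symm _ _ fun i => rfl
    · intro i u x; positivity
    · intro i u; simp
    · intro i v y; positivity
    · intro i v; simp
    · intro x y u v
      rw [← hQm u v x y, Finset.sum_filter]
      rw [← Fintype.sum_equiv (Fintype.equivFin ((U → X) × (V → Y))).symm _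
        (fun ab => if ab.1 u = x ∧ ab.2 v = y then Q ab else 0) (fun i => rfl)]
      refine Finset.sum_congr rfl fun i _ => ?_
      by_cases h1 : ((Fintype.equivFin ((U → X) × (V → Y))).symm i).1 u = x <;>
        by_cases h2 : ((Fintype.equivFin ((U → X) × (V → Y))).symm i).2 v = y <;>
        simp [h1, h2]
end

section
/- (Bell's theorem, CHSH form.) Let P be a bipartite system with binary input and output alphabets 𝒳 = 𝒴 = 𝒰 = 𝒱 = {0,1}. If the probability that X ⊕ Y = U·V under uniformly random inputs exceeds 3/4, i.e. (1/4) · Σ_{u,v ∈ {0,1}} Σ_{x,y : x⊕y = u·v} P(x,y|u,v) > 3/4, then P is not local. -/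
open Finset

/-- The CHSH winning probability (times 4) of a single product strategy is at most 3. -/
lemma chsh_prod (a b : Bool → Bool → ℝ)
    (ha0 : ∀ u x, 0 ≤ a u x) (ha1 : ∀ u, ∑ x, a u x = 1)
    (hb0 : ∀ v y, 0 ≤ b v y) (hb1 : ∀ v, ∑ y, b v y = 1) :
    ∑ u, ∑ v, ∑ x, ∑ y, (if xor x y = (u && v) then a u x * b v y else 0) ≤ 3 := by
  have ha1t := ha1 true; have ha1f := ha1 false
  have hb1t := hb1 true; have hb1f := hb1 false
  simp [Fintype.sum_bool] at ha1t ha1f hb1t hb1f ⊢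
  have hp := ha0 true true; have hq := ha0 false true
  have hr := hb0 true true; have hs := hb0 false true
  have hp' := ha0 true false; have hq' := ha0 false false
  have hr' := hb0 true false; have hs' := hb0 false false
  rcases le_total (b true true) (b false true) with h | h
  · nlinarith [mul_nonneg hp' (sub_nonneg.2 h), mul_nonneg hr hq',
      mul_nonneg hq hs', mul_nonneg hp hr, mul_nonneg hq hr]
  · nlinarith [mul_nonneg hp (sub_nonneg.2 h), mul_nonneg hq hr',
      mul_nonneg hs hq', mul_nonneg hp hs, mul_nonneg hq hs]

/-- Bell's theorem (CHSH form): any bipartite system with binary inputs and outputs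
which wins the PR game `x ⊕ y = u ∧ v` with probability (over uniform inputs)
exceeding 3/4 is non-local. -/
theorem bell_chsh (P : Bool → Bool → Bool → Bool → ℝ)
    (hnonneg : ∀ x y u v, 0 ≤ P x y u v)
    (hnorm : ∀ u v, ∑ x, ∑ y, P x y u v = 1)
    (hwin : (1/4 : ℝ) * ∑ u, ∑ v, ∑ x, ∑ y,
        (if xor x y = (u && v) then P x y u v else 0) > 3/4) :
    ¬ IsLocal P := by
  rintro ⟨m, w, A, B, hw0, hw1, hA0, hA1, hB0, hB1, hP⟩
  have hswap : (∑ u, ∑ v, ∑ x, ∑ y, (if xor x y = (u && v) then P x y u v else 0))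
      = ∑ i, w i * ∑ u, ∑ v, ∑ x, ∑ y,
          (if xor x y = (u && v) then A i u x * B i v y else 0) := by
    simp only [hP, Fintype.sum_bool]
    simp only [Bool.xor_true, Bool.xor_false, Bool.true_and, Bool.false_and,
      Bool.and_true, Bool.and_false, Bool.not_true, Bool.not_false]
    simp only [if_true, if_false, reduceIte, mul_add, Finset.sum_add_distrib]
    ring_nf
    norm_num
  have hbound : (∑ u, ∑ v, ∑ x, ∑ y, (if xor x y = (u && v) then P x y u v else 0)) ≤ 3 := by
    rw [hswap]
    calc ∑ i, w i * ∑ u, ∑ v, ∑ x, ∑ y,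
          (if xor x y = (u && v) then A i u x * B i v y else 0)
        ≤ ∑ i, w i * 3 := by
          apply Finset.sum_le_sum
          intro i _
          exact mul_le_mul_of_nonneg_left
            (chsh_prod (A i) (B i) (hA0 i) (hA1 i) (hB0 i) (hB1 i)) (hw0 i)
      _ = 3 := by rw [← Finset.sum_mul, hw1, one_mul]
  linarith
end

section
/- Let P be a box with binary alphabets 𝒳 = 𝒴 = 𝒰 = 𝒱 = {0,1} and let 0 ≤ ε ≤ 1/4. If Σ_{x,y : x⊕y = u·v} P(x,y|u,v) = 1 − ε for every input pair (u,v), then the marginal bias of Alice's output is bounded: Σ_y P(0,y|0,0) ≤ 1/2 + 2ε. -/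
open Finset

/-- A box (non-signaling system): nonnegative, normalized for each input pair,
and satisfying the two non-signaling conditions. -/
structure IsBox {X Y U V : Type} [Fintype X] [Fintype Y]
    (P : X → Y → U → V → ℝ) : Prop where
  nonneg : ∀ x y u v, 0 ≤ P x y u v
  norm : ∀ u v, ∑ x, ∑ y, P x y u v = 1
  nsA : ∀ y u u' v, ∑ x, P x y u v = ∑ x, P x y u' v
  nsB : ∀ x u v v', ∑ y, P x y u v = ∑ y, P x y u v'

/-- For a binary box fulfilling the PR condition `x ⊕ y = u ∧ v` with probability
`1 - ε` on every input pair, the marginal bias of Alice's output `X = 0`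
(on input `u = v = 0`) is at most `1/2 + 2ε`. -/
theorem bias_le_of_pr_error (P : Bool → Bool → Bool → Bool → ℝ) (hP : IsBox P)
    (ε : ℝ) (hε0 : 0 ≤ ε) (hε1 : ε ≤ 1/4)
    (hpr : ∀ u v, ∑ x, ∑ y, (if xor x y = (u && v) then P x y u v else 0) = 1 - ε) :
    ∑ y, P false y false false ≤ 1/2 + 2 * ε := by
  have h00 := hpr false false
  have h01 := hpr false true
  have h10 := hpr true false
  have h11 := hpr true true
  have n00 := hP.norm false false
  have n01 := hP.norm false true
  have n10 := hP.norm true false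
  have n11 := hP.norm true true
  have a0 := hP.nsA false false true false
  have a1 := hP.nsA false false true true
  have a2 := hP.nsA true false true false
  have a3 := hP.nsA true false true true
  have b0 := hP.nsB false false false true
  have b1 := hP.nsB false true false true
  have b2 := hP.nsB true false false true
  have b3 := hP.nsB true true false true
  have p0 := hP.nonneg false false false false
  have p1 := hP.nonneg false false false true
  have p2 := hP.nonneg false false true false
  have p3 := hP.nonneg false false true true
  have p4 := hP.nonneg false true false false
  have p5 := hP.nonneg false true false true
  have p6 := hP.nonneg false true true false
  have p7 := hP.nonneg false true true true
  have p8 := hP.nonneg true false false false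
  have p9 := hP.nonneg true false false true
  have p10 := hP.nonneg true false true false
  have p11 := hP.nonneg true false true true
  have p12 := hP.nonneg true true false false
  have p13 := hP.nonneg true true false true
  have p14 := hP.nonneg true true true false
  have p15 := hP.nonneg true true true true
  simp only [Fintype.sum_bool, Bool.xor_false, Bool.xor_true, Bool.and_false, Bool.and_true, Bool.false_and, Bool.true_and, if_true, if_false, Bool.not_true, Bool.not_false, Bool.true_eq_false, Bool.false_eq_true, reduceIte] at *
  linarith
end

section
/- Let P be a box on finite alphabets 𝒳, 𝒴, 𝒰, 𝒱, let 𝒲 be a finite set, and for each w ∈ 𝒲 let {(p^z_w, P^z_w)}_{z ∈ 𝒵} be a box partition of P indexed by a common finite set 𝒵. Define the tripartite system P̃(x,y,z|u,v,w) := p^z_w · P^z_w(x,y|u,v). Then P̃ is a tripartite non-signaling system (normalized, with Σ_x P̃ independent of u, Σ_y P̃ independent of v, and Σ_z P̃ independent of w), and its bipartite marginal on the first two parties equals P for every w. -/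
open Finset

/-- A box partition of a box `P`: nonnegative weights summing to one together with
boxes whose convex combination is `P`. -/
structure IsBoxPartition {X Y U V Z : Type} [Fintype X] [Fintype Y] [Fintype Z]
    (P : X → Y → U → V → ℝ) (p : Z → ℝ) (Q : Z → X → Y → U → V → ℝ) : Prop where
  weight_nonneg : ∀ z, 0 ≤ p z
  weight_sum : ∑ z, p z = 1
  box : ∀ z, IsBox (Q z)
  decomp : ∀ x y u v, ∑ z, p z * Q z x y u v = P x y u v

/-- A tripartite non-signaling system. -/
structure IsTripartiteNS {X Y Z U V W : Type} [Fintype X] [Fintype Y] [Fintype Z]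
    (P : X → Y → Z → U → V → W → ℝ) : Prop where
  nonneg : ∀ x y z u v w, 0 ≤ P x y z u v w
  norm : ∀ u v w, ∑ x, ∑ y, ∑ z, P x y z u v w = 1
  nsU : ∀ y z u u' v w, ∑ x, P x y z u v w = ∑ x, P x y z u' v w
  nsV : ∀ x z u v v' w, ∑ y, P x y z u v w = ∑ y, P x y z u v' w
  nsW : ∀ x y u v w w', ∑ z, P x y z u v w = ∑ z, P x y z u v w'

/-- Given a box `P` and, for each input `w` of a third party, a box partition of `P`,
the system `P̃(x,y,z|u,v,w) := p^z_w · P^z_w(x,y|u,v)` is a tripartite non-signaling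
system whose bipartite marginal on the first two parties equals `P` for every `w`. -/
theorem box_partitions_induce_tripartite {X Y U V W Z : Type}
    [Fintype X] [Fintype Y] [Fintype Z]
    (P : X → Y → U → V → ℝ) (hP : IsBox P)
    (p : W → Z → ℝ) (Q : W → Z → X → Y → U → V → ℝ)
    (hpart : ∀ w, IsBoxPartition P (p w) (Q w)) :
    IsTripartiteNS (fun x y z u v w => p w z * Q w z x y u v) ∧
    (∀ x y u v w, ∑ z, p w z * Q w z x y u v = P x y u v) := by
  refine ⟨⟨?_, ?_, ?_, ?_, ?_⟩, fun x y u v w => (hpart w).decomp x y u v⟩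
  · intro x y z u v w
    exact mul_nonneg ((hpart w).weight_nonneg z) (((hpart w).box z).nonneg x y u v)
  · intro u v w
    calc ∑ x, ∑ y, ∑ z, p w z * Q w z x y u v
        = ∑ x, ∑ y, P x y u v := by
          refine Finset.sum_congr rfl fun x _ => Finset.sum_congr rfl fun y _ => ?_
          exact (hpart w).decomp x y u v
      _ = 1 := hP.norm u v
  · intro y z u u' v w
    rw [← Finset.mul_sum, ← Finset.mul_sum, ((hpart w).box z).nsA y u u' v]
  · intro x z u v v' w
    rw [← Finset.mul_sum, ← Finset.mul_sum, ((hpart w).box z).nsB x u v v']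
  · intro x y u v w w'
    rw [(hpart w).decomp x y u v, (hpart w').decomp x y u v]
end

section
/- Let 0 < ε < 1/2, let n ≥ 1, let P be the n-fold PR box with error ε, and let XOR : {0,1}^n → {0,1} be the function x ↦ x_1 ⊕ x_2 ⊕ ⋯ ⊕ x_n. Then there exists a box partition w of P such that for every input pair (u,v), δ_w^{XOR}(u,v) = Σ_{k odd, 1 ≤ k ≤ n} C(n,k) (1−ε)^{n−k} ε^{k}, and this quantity is at least ε (strictly greater than ε for n > 1). In particular the XOR of the outputs of n boxes is no more secure against a non-signaling adversary than a single output bit. -/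
open Finset

/-- The unbiased PR box with error ε. -/
noncomputable def PRbox (ε : ℝ) (x y u v : Bool) : ℝ :=
  if xor x y = (u && v) then (1 - ε) / 2 else ε / 2

/-- The n-fold (product) PR box with error ε. -/
noncomputable def PRn (ε : ℝ) (n : ℕ) (x y u v : Fin n → Bool) : ℝ :=
  ∏ i, PRbox ε (x i) (y i) (u i) (v i)

/-- The non-uniformity of the key bit `f(X)` given a box partition `(p, Q)`,
at inputs `(u, v)`. -/
noncomputable def nonUniformity {n : ℕ} {Z : Type} [Fintype Z]
    (p : Z → ℝ)
    (Q : Z → (Fin n → Bool) → (Fin n → Bool) → (Fin n → Bool) → (Fin n → Bool) → ℝ)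
    (f : (Fin n → Bool) → Bool) (u v : Fin n → Bool) : ℝ :=
  (1/2) * ∑ z, p z *
    |(∑ x ∈ univ.filter (fun x => f x = false), ∑ y, Q z x y u v) -
      ∑ x ∈ univ.filter (fun x => f x = true), ∑ y, Q z x y u v|

/-- The XOR of all bits of a bit string. -/
def XORf {n : ℕ} (x : Fin n → Bool) : Bool :=
  (∑ i, (if x i then 1 else 0 : ℕ)) % 2 == 1

noncomputable def Gbox (ε : ℝ) (x y u v : Bool) : ℝ :=
  if xor x y = (u && v) then (1 - 2*ε) / 2 else 0

noncomputable def Gn (ε : ℝ) (n : ℕ) (x y u v : Fin n → Bool) : ℝ :=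
  ∏ i, Gbox ε (x i) (y i) (u i) (v i)

noncomputable def sg (b : Bool) : ℝ := if b then -1 else 1

lemma sg_sq (b : Bool) : sg b * sg b = 1 := by cases b <;> simp [sg]

lemma sum_pi_prod {n : ℕ} (f : Fin n → Bool → ℝ) :
    ∑ x : Fin n → Bool, ∏ i, f i (x i) = ∏ i, ∑ b, f i b := by
  rw [Finset.prod_univ_sum, Fintype.piFinset_univ]

lemma prod_sg {n : ℕ} (x : Fin n → Bool) : ∏ i, sg (x i) = sg (XORf x) := by
  have h : ∀ b : Bool, sg b = (-1 : ℝ) ^ (if b then 1 else 0 : ℕ) := by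
    intro b; cases b <;> simp [sg]
  calc ∏ i, sg (x i) = ∏ i, (-1:ℝ) ^ (if x i then 1 else 0 : ℕ) :=
        Finset.prod_congr rfl fun i _ => h (x i)
    _ = (-1:ℝ) ^ (∑ i, if x i then 1 else 0 : ℕ) := by rw [Finset.prod_pow_eq_pow_sum]
    _ = sg (XORf x) := by
        rcases Nat.even_or_odd (∑ i, if x i then 1 else 0 : ℕ) with he | ho
        · have h2 := Nat.even_iff.mp he
          have hx : XORf x = false := by unfold XORf; rw [h2]; rfl
          rw [he.neg_one_pow, hx]; simp [sg]
        · have h2 := Nat.odd_iff.mp ho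
          have hx : XORf x = true := by unfold XORf; rw [h2]; rfl
          rw [ho.neg_one_pow, hx]; simp [sg]

-- per-box lemmas
lemma sumx_PRbox (ε : ℝ) (y u v : Bool) : ∑ x : Bool, PRbox ε x y u v = 1/2 := by
  cases y <;> cases u <;> cases v <;> simp [PRbox] <;> ring

lemma sumy_PRbox (ε : ℝ) (x u v : Bool) : ∑ y : Bool, PRbox ε x y u v = 1/2 := by
  cases x <;> cases u <;> cases v <;> simp [PRbox] <;> ring

lemma sumy_Gbox (ε : ℝ) (x u v : Bool) : ∑ y : Bool, Gbox ε x y u v = (1-2*ε)/2 := by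
  cases x <;> cases u <;> cases v <;> simp [Gbox]

lemma sumx_sg_box (ε : ℝ) (y u v : Bool) :
    ∑ x : Bool, sg x * PRbox ε x y u v = ∑ x : Bool, sg x * Gbox ε x y u v := by
  cases y <;> cases u <;> cases v <;> simp [PRbox, Gbox, sg] <;> ring

-- n-fold lemmas
lemma sumy_PRn (ε : ℝ) (n : ℕ) (x u v : Fin n → Bool) :
    ∑ y, PRn ε n x y u v = (1/2:ℝ)^n := by
  calc ∑ y : Fin n → Bool, ∏ i, PRbox ε (x i) (y i) (u i) (v i)
      = ∏ i, ∑ b, PRbox ε (x i) b (u i) (v i) := sum_pi_prod (fun i b => PRbox ε (x i) b (u i) (v i))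
    _ = ∏ _i : Fin n, (1/2:ℝ) := Finset.prod_congr rfl fun i _ => sumy_PRbox ε (x i) (u i) (v i)
    _ = (1/2:ℝ)^n := by simp

lemma sumx_PRn (ε : ℝ) (n : ℕ) (y u v : Fin n → Bool) :
    ∑ x, PRn ε n x y u v = (1/2:ℝ)^n := by
  calc ∑ x : Fin n → Bool, ∏ i, PRbox ε (x i) (y i) (u i) (v i)
      = ∏ i, ∑ b, PRbox ε b (y i) (u i) (v i) := sum_pi_prod (fun i b => PRbox ε b (y i) (u i) (v i))
    _ = ∏ _i : Fin n, (1/2:ℝ) := Finset.prod_congr rfl fun i _ => sumx_PRbox ε (y i) (u i) (v i)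
    _ = (1/2:ℝ)^n := by simp

lemma sumy_Gn (ε : ℝ) (n : ℕ) (x u v : Fin n → Bool) :
    ∑ y, Gn ε n x y u v = ((1-2*ε)/2:ℝ)^n := by
  calc ∑ y : Fin n → Bool, ∏ i, Gbox ε (x i) (y i) (u i) (v i)
      = ∏ i, ∑ b, Gbox ε (x i) b (u i) (v i) := sum_pi_prod (fun i b => Gbox ε (x i) b (u i) (v i))
    _ = ∏ _i : Fin n, ((1-2*ε)/2:ℝ) := Finset.prod_congr rfl fun i _ => sumy_Gbox ε (x i) (u i) (v i)
    _ = ((1-2*ε)/2:ℝ)^n := by rw [Finset.prod_const, Finset.card_univ, Fintype.card_fin]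

lemma sumx_sg_PRn_Gn (ε : ℝ) (n : ℕ) (y u v : Fin n → Bool) :
    ∑ x, sg (XORf x) * PRn ε n x y u v = ∑ x, sg (XORf x) * Gn ε n x y u v := by
  have h1 : ∀ x : Fin n → Bool, sg (XORf x) * PRn ε n x y u v
      = ∏ i, (sg (x i) * PRbox ε (x i) (y i) (u i) (v i)) := by
    intro x
    rw [Finset.prod_mul_distrib, prod_sg]; rfl
  have h2 : ∀ x : Fin n → Bool, sg (XORf x) * Gn ε n x y u v
      = ∏ i, (sg (x i) * Gbox ε (x i) (y i) (u i) (v i)) := by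
    intro x
    rw [Finset.prod_mul_distrib, prod_sg]; rfl
  calc ∑ x, sg (XORf x) * PRn ε n x y u v
      = ∑ x : Fin n → Bool, ∏ i, (sg (x i) * PRbox ε (x i) (y i) (u i) (v i)) :=
        Finset.sum_congr rfl fun x _ => h1 x
    _ = ∏ i, ∑ b, sg b * PRbox ε b (y i) (u i) (v i) := sum_pi_prod (fun i b => sg b * PRbox ε b (y i) (u i) (v i))
    _ = ∏ i, ∑ b, sg b * Gbox ε b (y i) (u i) (v i) :=
        Finset.prod_congr rfl fun i _ => sumx_sg_box ε (y i) (u i) (v i)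
    _ = ∑ x : Fin n → Bool, ∏ i, (sg (x i) * Gbox ε (x i) (y i) (u i) (v i)) :=
        (sum_pi_prod (fun i b => sg b * Gbox ε b (y i) (u i) (v i))).symm
    _ = ∑ x, sg (XORf x) * Gn ε n x y u v := (Finset.sum_congr rfl fun x _ => (h2 x).symm)

lemma sumx_sg_zero (n : ℕ) (hn : 1 ≤ n) : ∑ x : Fin n → Bool, sg (XORf x) = 0 := by
  have h : ∑ x : Fin n → Bool, sg (XORf x) = ∏ i : Fin n, ∑ b, sg b := by
    rw [← sum_pi_prod]
    exact Finset.sum_congr rfl fun x _ => (prod_sg x).symm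
  have hb : ∑ b : Bool, sg b = 0 := by simp [sg]
  rw [h, Finset.prod_congr rfl fun i _ => hb, Finset.prod_const]
  simp only [Finset.card_univ, Fintype.card_fin]
  exact zero_pow (by omega)

lemma Gn_nonneg (ε : ℝ) (hε1 : ε ≤ 1/2) (n : ℕ) (x y u v : Fin n → Bool) :
    0 ≤ Gn ε n x y u v := by
  apply Finset.prod_nonneg
  intro i _
  unfold Gbox
  split <;> [linarith; linarith]

lemma Gn_le_PRn (ε : ℝ) (hε0 : 0 ≤ ε) (hε1 : ε ≤ 1/2) (n : ℕ) (x y u v : Fin n → Bool) :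
    Gn ε n x y u v ≤ PRn ε n x y u v := by
  apply Finset.prod_le_prod
  · intro i _
    unfold Gbox; split <;> linarith
  · intro i _
    unfold Gbox PRbox; split <;> linarith

lemma PRn_nonneg (ε : ℝ) (hε0 : 0 ≤ ε) (hε1 : ε ≤ 1) (n : ℕ) (x y u v : Fin n → Bool) :
    0 ≤ PRn ε n x y u v := by
  apply Finset.prod_nonneg
  intro i _
  unfold PRbox; split <;> linarith

lemma card_fb (n : ℕ) : Fintype.card (Fin n → Bool) = 2^n := by simp

lemma binom_sum (ε : ℝ) (n : ℕ) :
    ∑ k ∈ (Finset.range (n+1)).filter (fun k => k % 2 = 1),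
      (n.choose k : ℝ) * (1 - ε)^(n - k) * ε^k = (1 - (1-2*ε)^n)/2 := by
  have h1 : (1:ℝ) = ∑ k ∈ Finset.range (n+1), ε^k * (1-ε)^(n-k) * (n.choose k : ℝ) := by
    have h := add_pow ε (1-ε) n
    have he : ε + (1-ε) = (1:ℝ) := by ring
    rw [he, one_pow] at h
    exact h
  have h2 : ((1:ℝ)-2*ε)^n = ∑ k ∈ Finset.range (n+1), (-ε)^k * (1-ε)^(n-k) * (n.choose k : ℝ) := by
    have h := add_pow (-ε) (1-ε) n
    have he : -ε + (1-ε) = (1:ℝ)-2*ε := by ring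
    rw [he] at h
    exact h
  have h3 : (1:ℝ) - (1-2*ε)^n = ∑ k ∈ Finset.range (n+1),
      (ε^k * (1-ε)^(n-k) * (n.choose k : ℝ) - (-ε)^k * (1-ε)^(n-k) * (n.choose k : ℝ)) := by
    rw [Finset.sum_sub_distrib, ← h1, ← h2]
  have h4 : ∑ k ∈ Finset.range (n+1),
      (ε^k * (1-ε)^(n-k) * (n.choose k : ℝ) - (-ε)^k * (1-ε)^(n-k) * (n.choose k : ℝ))
      = 2 * (∑ k ∈ (Finset.range (n+1)).filter (fun k => k % 2 = 1),
          (n.choose k : ℝ) * (1 - ε)^(n - k) * ε^k) := by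
    rw [Finset.mul_sum, Finset.sum_filter]
    apply Finset.sum_congr rfl
    intro k _
    rcases Nat.even_or_odd k with he | ho
    · have h5 := Nat.even_iff.mp he
      rw [he.neg_pow]
      simp only [h5]
      norm_num
    · have h5 := Nat.odd_iff.mp ho
      rw [ho.neg_pow]
      simp only [h5]
      norm_num
      ring
  linarith

lemma sum_const_fb (n : ℕ) (c : ℝ) : ∑ _x : Fin n → Bool, c = (2:ℝ)^n * c := by
  rw [Finset.sum_const, Finset.card_univ, card_fb, nsmul_eq_mul]
  push_cast
  ring

lemma filter_sub_eq_sum_sg {n : ℕ} (g : (Fin n → Bool) → ℝ) :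
    ((∑ x ∈ univ.filter (fun x => XORf x = false), g x) -
      ∑ x ∈ univ.filter (fun x => XORf x = true), g x)
    = ∑ x, sg (XORf x) * g x := by
  rw [Finset.sum_filter, Finset.sum_filter, ← Finset.sum_sub_distrib]
  apply Finset.sum_congr rfl
  intro x _
  cases h : XORf x <;> simp [sg, h]

lemma sumy_Q (ε : ℝ) (n : ℕ) (z : Bool) (x u v : Fin n → Bool) :
    ∑ y, (PRn ε n x y u v + sg z * sg (XORf x) * (PRn ε n x y u v - Gn ε n x y u v))
      = (1/2:ℝ)^n + sg z * sg (XORf x) * ((1/2:ℝ)^n - ((1-2*ε)/2)^n) := by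
  rw [Finset.sum_add_distrib, ← Finset.mul_sum, Finset.sum_sub_distrib, sumy_PRn, sumy_Gn]

lemma sumx_Q (ε : ℝ) (n : ℕ) (z : Bool) (y u v : Fin n → Bool) :
    ∑ x, (PRn ε n x y u v + sg z * sg (XORf x) * (PRn ε n x y u v - Gn ε n x y u v))
      = (1/2:ℝ)^n := by
  rw [Finset.sum_add_distrib, sumx_PRn]
  have h1 : ∀ x ∈ (univ : Finset (Fin n → Bool)),
      sg z * sg (XORf x) * (PRn ε n x y u v - Gn ε n x y u v)
      = sg z * (sg (XORf x) * PRn ε n x y u v - sg (XORf x) * Gn ε n x y u v) :=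
    fun x _ => by ring
  rw [Finset.sum_congr rfl h1, ← Finset.mul_sum, Finset.sum_sub_distrib,
    sumx_sg_PRn_Gn, sub_self, mul_zero, add_zero]


/-- There is a box partition `w` of the n-fold PR box with error ε such that the
non-uniformity of the XOR of Alice's output bits equals, for every input pair,
`∑_{k odd} C(n,k) (1-ε)^{n-k} ε^k`; this quantity is at least ε, and strictly greater
than ε for `n > 1`.  Hence the XOR of `n` output bits is no more secure against a
non-signaling adversary than a single output bit. -/
theorem xor_privacy_amplification_fails (ε : ℝ) (hε0 : 0 < ε) (hε1 : ε < 1/2)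
    (n : ℕ) (hn : 1 ≤ n) :
    ∃ (Z : Type) (iZ : Fintype Z) (p : Z → ℝ)
      (Q : Z → (Fin n → Bool) → (Fin n → Bool) → (Fin n → Bool) → (Fin n → Bool) → ℝ),
      @IsBoxPartition _ _ _ _ Z _ _ iZ (PRn ε n) p Q ∧
      (∀ u v, @nonUniformity n Z iZ p Q XORf u v =
        ∑ k ∈ (Finset.range (n+1)).filter (fun k => k % 2 = 1),
          (n.choose k : ℝ) * (1 - ε)^(n - k) * ε^k) ∧
      ε ≤ (∑ k ∈ (Finset.range (n+1)).filter (fun k => k % 2 = 1),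
          (n.choose k : ℝ) * (1 - ε)^(n - k) * ε^k) ∧
      (1 < n → ε < ∑ k ∈ (Finset.range (n+1)).filter (fun k => k % 2 = 1),
          (n.choose k : ℝ) * (1 - ε)^(n - k) * ε^k) := by
  
  have hε0' : (0:ℝ) ≤ ε := le_of_lt hε0
  have hε1' : ε ≤ 1/2 := le_of_lt hε1
  have hεle1 : ε ≤ 1 := by linarith
  refine ⟨Bool, inferInstance, fun _ => 1/2,
    (fun z x y u v => PRn ε n x y u v +
      sg z * sg (XORf x) * (PRn ε n x y u v - Gn ε n x y u v)), ?_, ?_, ?_, ?_⟩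
  · constructor
    · intro z; norm_num
    · rw [Fintype.sum_bool]; norm_num
    · intro z
      constructor
      · intro x y u v
        have hG0 := Gn_nonneg ε hε1' n x y u v
        have hGP := Gn_le_PRn ε hε0' hε1' n x y u v
        cases z <;> cases hx : XORf x <;> simp [sg, hx] <;> linarith
      · intro u v
        rw [Finset.sum_congr rfl fun x _ => sumy_Q ε n z x u v,
          Finset.sum_add_distrib]
        have h1 : ∀ x ∈ (univ : Finset (Fin n → Bool)),
            sg z * sg (XORf x) * ((1/2:ℝ)^n - ((1-2*ε)/2)^n)
            = (sg z * ((1/2:ℝ)^n - ((1-2*ε)/2)^n)) * sg (XORf x) := fun x _ => by ring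
        rw [Finset.sum_congr rfl h1, ← Finset.mul_sum, sumx_sg_zero n hn, mul_zero,
          add_zero, sum_const_fb, ← mul_pow]
        norm_num
      · intro y u u' v
        rw [sumx_Q, sumx_Q]
      · intro x u v v'
        rw [sumy_Q, sumy_Q]
    · intro x y u v
      rw [Fintype.sum_bool]
      cases hx : XORf x <;> simp [sg, hx] <;> ring
  · intro u v
    rw [binom_sum]
    unfold nonUniformity
    have hnn : (0:ℝ) ≤ 1 - (1-2*ε)^n := by
      have h := pow_le_one₀ (n := n) (by linarith : (0:ℝ) ≤ 1-2*ε) (by linarith : (1:ℝ)-2*ε ≤ 1)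
      linarith
    have key : ∀ z : Bool,
        |(∑ x ∈ univ.filter (fun x => XORf x = false), ∑ y,
            (PRn ε n x y u v + sg z * sg (XORf x) * (PRn ε n x y u v - Gn ε n x y u v))) -
          ∑ x ∈ univ.filter (fun x => XORf x = true), ∑ y,
            (PRn ε n x y u v + sg z * sg (XORf x) * (PRn ε n x y u v - Gn ε n x y u v))|
        = 1 - (1-2*ε)^n := by
      intro z
      rw [filter_sub_eq_sum_sg]
      have h1 : ∀ x ∈ (univ : Finset (Fin n → Bool)),
          sg (XORf x) * (∑ y, (PRn ε n x y u v +
            sg z * sg (XORf x) * (PRn ε n x y u v - Gn ε n x y u v)))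
          = sg (XORf x) * (1/2:ℝ)^n
            + sg z * ((1/2:ℝ)^n - ((1-2*ε)/2)^n) := by
        intro x _
        rw [sumy_Q]
        cases hx : XORf x <;> cases z <;> simp [sg] <;> ring
      rw [Finset.sum_congr rfl h1, Finset.sum_add_distrib, ← Finset.sum_mul,
        sumx_sg_zero n hn, zero_mul, zero_add, sum_const_fb]
      have hm : (2:ℝ)^n * (sg z * ((1/2:ℝ)^n - ((1-2*ε)/2)^n))
          = sg z * (1 - (1-2*ε)^n) := by
        have h2 : (2:ℝ)^n * ((1/2:ℝ)^n - ((1-2*ε)/2)^n) = 1 - (1-2*ε)^n := by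
          rw [mul_sub, ← mul_pow, ← mul_pow]
          norm_num
          ring_nf
        calc (2:ℝ)^n * (sg z * ((1/2:ℝ)^n - ((1-2*ε)/2)^n))
            = sg z * ((2:ℝ)^n * ((1/2:ℝ)^n - ((1-2*ε)/2)^n)) := by ring
          _ = sg z * (1 - (1-2*ε)^n) := by rw [h2]
      rw [hm, abs_mul]
      cases z <;> simp [sg] <;> linarith
    rw [Fintype.sum_bool, key true, key false]
    ring
  · rw [binom_sum]
    have h := pow_le_of_le_one (by linarith : (0:ℝ) ≤ 1-2*ε)
      (by linarith : (1:ℝ)-2*ε ≤ 1) (by omega : n ≠ 0)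
    linarith
  · intro hn2
    rw [binom_sum]
    have h := pow_lt_self_of_lt_one₀ (by linarith : (0:ℝ) < 1-2*ε)
      (by linarith : (1:ℝ)-2*ε < 1) hn2
    linarith
end

section
/- Let 0 ≤ ε ≤ 1/2, let P be the n-fold PR box with error ε, let f : {0,1}^n → {0,1}, and let g : {0,1}^n → {0,1} be the maximum-likelihood function of f(X) given Y at input (0…0, 0…0), i.e., g(y) = 0 if Σ_{x : f(x)=0} P(x,y|0…0,0…0) ≥ Σ_{x : f(x)=1} P(x,y|0…0,0…0) and g(y) = 1 otherwise. Then there exists a box partition w of P such that δ_w^f(0…0,0…0) ≥ | δ_g − δ_f |, where δ_f := |Σ_{x : f(x)=0, y} P(x,y|0…0,0…0) − 1/2| and δ_g := |Σ_{x, y : g(y)=0} P(x,y|0…0,0…0) − 1/2| are the distances from uniform of the bits f(X) and g(Y) under P at input (0…0, 0…0). -/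
open Finset

noncomputable section PRauxSec
namespace PRaux

variable (ε : ℝ) (n : ℕ)


lemma prb_nonneg (hε0 : 0 ≤ ε) (hε1 : ε ≤ 1/2) (a b du dv : Bool) :
    0 ≤ PRbox ε a b du dv := by
  unfold PRbox; split <;> linarith

lemma prb_sum_fst (b du dv : Bool) :
    PRbox ε false b du dv + PRbox ε true b du dv = 1/2 := by
  cases b <;> cases du <;> cases dv <;> simp [PRbox] <;> ring

lemma prb_sum_snd (a du dv : Bool) :
    PRbox ε a false du dv + PRbox ε a true du dv = 1/2 := by
  cases a <;> cases du <;> cases dv <;> simp [PRbox] <;> ring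

lemma prb_shift (a b du dv : Bool) :
    PRbox ε a b du dv = PRbox ε a (xor b (du && dv)) false false := by
  cases a <;> cases b <;> cases du <;> cases dv <;> simp [PRbox]

lemma prn_nonneg (hε0 : 0 ≤ ε) (hε1 : ε ≤ 1/2) (x y u v : Fin n → Bool) :
    0 ≤ PRn ε n x y u v :=
  Finset.prod_nonneg fun i _ => prb_nonneg ε hε0 hε1 _ _ _ _

lemma prn_sum_x (y u v : Fin n → Bool) :
    ∑ x : Fin n → Bool, PRn ε n x y u v = (1/2)^n := by
  unfold PRn
  rw [← Fintype.prod_sum (fun i (b : Bool) => PRbox ε b (y i) (u i) (v i))]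
  rw [show ((1/2:ℝ))^n = ∏ _i : Fin n, (1/2:ℝ) by simp]
  exact Finset.prod_congr rfl fun i _ => by
    rw [Fintype.sum_bool]; rw [add_comm]; exact prb_sum_fst ε (y i) (u i) (v i)

lemma prn_sum_y (x u v : Fin n → Bool) :
    ∑ y : Fin n → Bool, PRn ε n x y u v = (1/2)^n := by
  unfold PRn
  rw [← Fintype.prod_sum (fun i (b : Bool) => PRbox ε (x i) b (u i) (v i))]
  rw [show ((1/2:ℝ))^n = ∏ _i : Fin n, (1/2:ℝ) by simp]
  exact Finset.prod_congr rfl fun i _ => by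
    rw [Fintype.sum_bool]; rw [add_comm]; exact prb_sum_snd ε (x i) (u i) (v i)


def xv (a b : Fin n → Bool) : Fin n → Bool := fun i => xor (a i) (b i)

def wv (u v : Fin n → Bool) : Fin n → Bool := fun i => u i && v i

def z0 : Fin n → Bool := fun _ => false

lemma xv_invol (w y : Fin n → Bool) : xv n (xv n y w) w = y := by
  funext i; simp [xv, Bool.xor_assoc]

lemma xv_zero (y : Fin n → Bool) : xv n y (z0 n) = y := by
  funext i; simp [xv, z0]

lemma wv_zero : wv n (z0 n) (z0 n) = z0 n := by
  funext i; simp [wv, z0]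

lemma sum_xv (w : Fin n → Bool) (F : (Fin n → Bool) → ℝ) :
    ∑ y : Fin n → Bool, F (xv n y w) = ∑ y : Fin n → Bool, F y := by
  apply Fintype.sum_bijective (fun y => xv n y w)
  · exact Function.Involutive.bijective (fun y => xv_invol n w y)
  · intro y; rfl

lemma prn_shift (x y u v : Fin n → Bool) :
    PRn ε n x y u v = PRn ε n x (xv n y (wv n u v)) (z0 n) (z0 n) := by
  unfold PRn
  exact Finset.prod_congr rfl fun i _ => prb_shift ε (x i) (y i) (u i) (v i)

variable (f : (Fin n → Bool) → Bool)

noncomputable def S0 (y : Fin n → Bool) : ℝ :=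
  ∑ x ∈ univ.filter (fun x => f x = false), PRn ε n x y (z0 n) (z0 n)

noncomputable def S1 (y : Fin n → Bool) : ℝ :=
  ∑ x ∈ univ.filter (fun x => f x = true), PRn ε n x y (z0 n) (z0 n)

noncomputable def tb (y : Fin n → Bool) : ℝ := S0 ε n f y - S1 ε n f y

noncomputable def eta (y : Fin n → Bool) : ℝ :=
  if 0 ≤ tb ε n f y then 1
  else ((1/2)^n + tb ε n f y) / ((1/2)^n - tb ε n f y)

noncomputable def D (x y : Fin n → Bool) : ℝ :=
  (if f x = false then eta ε n f y * (1 - tb ε n f y / S0 ε n f y)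
   else -(eta ε n f y)) * PRn ε n x y (z0 n) (z0 n)

noncomputable def Qb (z : Bool) (x y u v : Fin n → Bool) : ℝ :=
  PRn ε n x y u v + (if z then 1 else -1) * D ε n f x (xv n y (wv n u v))

section core

lemma S0_nonneg (hε0 : 0 ≤ ε) (hε1 : ε ≤ 1/2) (y : Fin n → Bool) : 0 ≤ S0 ε n f y :=
  Finset.sum_nonneg fun x _ => prn_nonneg ε n hε0 hε1 _ _ _ _

lemma S1_nonneg (hε0 : 0 ≤ ε) (hε1 : ε ≤ 1/2) (y : Fin n → Bool) : 0 ≤ S1 ε n f y :=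
  Finset.sum_nonneg fun x _ => prn_nonneg ε n hε0 hε1 _ _ _ _

lemma S_sum (y : Fin n → Bool) : S0 ε n f y + S1 ε n f y = (1/2)^n := by
  unfold S0 S1
  rw [add_comm, ← prn_sum_x ε n y (z0 n) (z0 n)]
  rw [← Finset.sum_filter_add_sum_filter_not univ (fun x => f x = true)]
  congr 1
  apply Finset.sum_congr _ (fun _ _ => rfl)
  apply Finset.filter_congr; intro x _; simp

lemma c_pos : (0:ℝ) < (1/2)^n := by positivity

lemma tb_abs_le (hε0 : 0 ≤ ε) (hε1 : ε ≤ 1/2) (y : Fin n → Bool) : |tb ε n f y| ≤ (1/2)^n := by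
  have h0 := S0_nonneg ε n f hε0 hε1 y
  have h1 := S1_nonneg ε n f hε0 hε1 y
  have hs := S_sum ε n f y
  rw [abs_le]; unfold tb; constructor <;> linarith

lemma eta_nonneg (hε0 : 0 ≤ ε) (hε1 : ε ≤ 1/2) (y : Fin n → Bool) : 0 ≤ eta ε n f y := by
  unfold eta; split
  · norm_num
  · have := tb_abs_le ε n f hε0 hε1 y
    rw [abs_le] at this
    have := c_pos n
    apply div_nonneg <;> linarith

lemma eta_le_one (hε0 : 0 ≤ ε) (hε1 : ε ≤ 1/2) (y : Fin n → Bool) : eta ε n f y ≤ 1 := by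
  unfold eta; split
  · exact le_refl 1
  · have := tb_abs_le ε n f hε0 hε1 y
    rw [abs_le] at this
    have hlt : ¬ (0 ≤ tb ε n f y) := by assumption
    push_neg at hlt
    have hd : (0:ℝ) < (1/2)^n - tb ε n f y := by
      have := c_pos n; linarith
    rw [div_le_one hd]; linarith

lemma eta_S0_zero (y : Fin n → Bool) (h : S0 ε n f y = 0) : eta ε n f y = 0 := by
  have hs := S_sum ε n f y
  have hc := c_pos n
  have ht : tb ε n f y = -(1/2)^n := by unfold tb; rw [h] at hs ⊢; linarith
  unfold eta; rw [ht]
  have : ¬ (0 ≤ -((1:ℝ)/2)^n) := by push_neg; linarith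
  rw [if_neg this]; simp

lemma eta_mul_div_S0 (y : Fin n → Bool) :
    eta ε n f y * (tb ε n f y / S0 ε n f y) * S0 ε n f y = eta ε n f y * tb ε n f y := by
  by_cases h : S0 ε n f y = 0
  · rw [eta_S0_zero ε n f y h]; ring
  · field_simp


lemma coef_S0 (y : Fin n → Bool) :
    eta ε n f y * (1 - tb ε n f y / S0 ε n f y) * S0 ε n f y
      = eta ε n f y * S0 ε n f y - eta ε n f y * tb ε n f y := by
  have h : eta ε n f y * (1 - tb ε n f y / S0 ε n f y) * S0 ε n f y
      = eta ε n f y * S0 ε n f y - eta ε n f y * (tb ε n f y / S0 ε n f y) * S0 ε n f y := by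
    ring
  rw [h, eta_mul_div_S0]

lemma coef_abs_le_one (hε0 : 0 ≤ ε) (hε1 : ε ≤ 1/2) (x y : Fin n → Bool) :
    |if f x = false then eta ε n f y * (1 - tb ε n f y / S0 ε n f y)
      else -(eta ε n f y)| ≤ 1 := by
  have hS0 := S0_nonneg ε n f hε0 hε1 y
  have hS1 := S1_nonneg ε n f hε0 hε1 y
  have hs := S_sum ε n f y
  have hc := c_pos n
  have he0 := eta_nonneg ε n f hε0 hε1 y
  have he1 := eta_le_one ε n f hε0 hε1 y
  split
  · by_cases ht : 0 ≤ tb ε n f y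
    · have heta : eta ε n f y = 1 := if_pos ht
      rw [heta, one_mul]
      by_cases hS : S0 ε n f y = 0
      · have ht0 : tb ε n f y = 0 := by
          unfold tb at ht ⊢; rw [hS] at ht ⊢; linarith
        rw [ht0, hS]; norm_num
      · have hSpos : 0 < S0 ε n f y := lt_of_le_of_ne hS0 (Ne.symm hS)
        have h1 : tb ε n f y / S0 ε n f y ≤ 1 := by
          rw [div_le_one hSpos]; unfold tb; linarith
        have h2 : 0 ≤ tb ε n f y / S0 ε n f y := div_nonneg ht hS0
        rw [abs_le]; constructor <;> linarith
    · push_neg at ht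
      by_cases hS : S0 ε n f y = 0
      · rw [eta_S0_zero ε n f y hS]; norm_num
      · have hSpos : 0 < S0 ε n f y := lt_of_le_of_ne hS0 (Ne.symm hS)
        have hS1pos : 0 < S1 ε n f y := by unfold tb at ht; linarith
        have hkey : eta ε n f y * (1 - tb ε n f y / S0 ε n f y) = 1 := by
          unfold eta
          rw [if_neg (by push_neg; exact ht)]
          have hceq : ((1:ℝ)/2)^n = S0 ε n f y + S1 ε n f y := hs.symm
          have hteq : tb ε n f y = S0 ε n f y - S1 ε n f y := rfl
          rw [hceq, hteq]
          field_simp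
          ring_nf
          exact mul_inv_cancel_right₀ hS1pos.ne' _
        rw [hkey]; norm_num
  · rw [abs_neg, abs_of_nonneg he0]; exact he1

lemma D_abs_le (hε0 : 0 ≤ ε) (hε1 : ε ≤ 1/2) (x y : Fin n → Bool) :
    |D ε n f x y| ≤ PRn ε n x y (z0 n) (z0 n) := by
  unfold D
  rw [abs_mul, abs_of_nonneg (prn_nonneg ε n hε0 hε1 _ _ _ _)]
  calc |if f x = false then eta ε n f y * (1 - tb ε n f y / S0 ε n f y)
          else -(eta ε n f y)| * PRn ε n x y (z0 n) (z0 n)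
      ≤ 1 * PRn ε n x y (z0 n) (z0 n) := by
        exact mul_le_mul_of_nonneg_right (coef_abs_le_one ε n f hε0 hε1 x y)
          (prn_nonneg ε n hε0 hε1 _ _ _ _)
    _ = PRn ε n x y (z0 n) (z0 n) := one_mul _

lemma filter_not_false :
    (univ.filter (fun x : Fin n → Bool => ¬ f x = false))
      = univ.filter (fun x => f x = true) := by
  apply Finset.filter_congr; intro x _; cases f x <;> simp

lemma sum_D_f0 (y : Fin n → Bool) :
    ∑ x ∈ univ.filter (fun x => f x = false), D ε n f x y
      = eta ε n f y * (1 - tb ε n f y / S0 ε n f y) * S0 ε n f y := by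
  calc ∑ x ∈ univ.filter (fun x => f x = false), D ε n f x y
      = ∑ x ∈ univ.filter (fun x => f x = false),
          eta ε n f y * (1 - tb ε n f y / S0 ε n f y) * PRn ε n x y (z0 n) (z0 n) := by
        apply Finset.sum_congr rfl
        intro x hx
        have hfx : f x = false := (Finset.mem_filter.1 hx).2
        unfold D; rw [if_pos hfx]
    _ = eta ε n f y * (1 - tb ε n f y / S0 ε n f y) * S0 ε n f y :=
        (Finset.mul_sum _ _ _).symm

lemma sum_D_f1 (y : Fin n → Bool) :
    ∑ x ∈ univ.filter (fun x => f x = true), D ε n f x y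
      = -(eta ε n f y * S1 ε n f y) := by
  calc ∑ x ∈ univ.filter (fun x => f x = true), D ε n f x y
      = ∑ x ∈ univ.filter (fun x => f x = true),
          -(eta ε n f y) * PRn ε n x y (z0 n) (z0 n) := by
        apply Finset.sum_congr rfl
        intro x hx
        have hfx : f x = true := (Finset.mem_filter.1 hx).2
        unfold D; rw [if_neg (by simp [hfx])]
    _ = -(eta ε n f y) * S1 ε n f y := (Finset.mul_sum _ _ _).symm
    _ = -(eta ε n f y * S1 ε n f y) := by ring

lemma sum_x_D (y : Fin n → Bool) : ∑ x : Fin n → Bool, D ε n f x y = 0 := by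
  rw [← Finset.sum_filter_add_sum_filter_not univ (fun x => f x = false)]
  rw [filter_not_false, sum_D_f0, sum_D_f1, coef_S0]
  have : eta ε n f y * tb ε n f y
      = eta ε n f y * S0 ε n f y - eta ε n f y * S1 ε n f y := by
    unfold tb; ring
  rw [this]; ring

lemma eta_mul_c_sub_t (y : Fin n → Bool) :
    eta ε n f y * ((1/2)^n - tb ε n f y) = (1/2)^n - |tb ε n f y| := by
  by_cases ht : 0 ≤ tb ε n f y
  · rw [abs_of_nonneg ht]; unfold eta; rw [if_pos ht, one_mul]
  · push_neg at ht
    rw [abs_of_neg ht]; unfold eta; rw [if_neg (by push_neg; exact ht)]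
    have hd : ((1:ℝ)/2)^n - tb ε n f y ≠ 0 := by
      have := c_pos n; intro h; nlinarith
    rw [div_mul_cancel₀ _ hd]; ring


lemma sum_const_c : ∑ _x : Fin n → Bool, ((1:ℝ)/2)^n = 1 := by
  rw [Finset.sum_const, Finset.card_univ]
  simp only [Fintype.card_fun, Fintype.card_bool, Fintype.card_fin, nsmul_eq_mul]
  push_cast
  rw [← mul_pow]
  norm_num

lemma sum_x_Qb (z : Bool) (y u v : Fin n → Bool) :
    ∑ x : Fin n → Bool, Qb ε n f z x y u v = (1/2)^n := by
  unfold Qb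
  rw [Finset.sum_add_distrib, prn_sum_x, ← Finset.mul_sum]
  rw [sum_x_D ε n f (xv n y (wv n u v))]
  ring

lemma sum_y_Qb (z : Bool) (x u v : Fin n → Bool) :
    ∑ y : Fin n → Bool, Qb ε n f z x y u v
      = (1/2)^n + (if z then 1 else -1) * ∑ y : Fin n → Bool, D ε n f x y := by
  unfold Qb
  rw [Finset.sum_add_distrib, prn_sum_y, ← Finset.mul_sum]
  rw [sum_xv n (wv n u v) (fun y => D ε n f x y)]

lemma Qb_isBox (hε0 : 0 ≤ ε) (hε1 : ε ≤ 1/2) (z : Bool) : IsBox (Qb ε n f z) := by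
  constructor
  · intro x y u v
    have habs := D_abs_le ε n f hε0 hε1 x (xv n y (wv n u v))
    rw [abs_le] at habs
    have hshift := prn_shift ε n x y u v
    unfold Qb
    rw [hshift]
    cases z
    · rw [show (if (false : Bool) = true then (1:ℝ) else -1) = -1 by norm_num]
      linarith [habs.1, habs.2]
    · rw [show (if (true : Bool) = true then (1:ℝ) else -1) = 1 by norm_num]
      linarith [habs.1, habs.2]
  · intro u v
    have : ∀ x : Fin n → Bool, ∑ y, Qb ε n f z x y u v
        = (1/2)^n + (if z then 1 else -1) * ∑ y : Fin n → Bool, D ε n f x y :=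
      fun x => sum_y_Qb ε n f z x u v
    rw [Finset.sum_congr rfl (fun x _ => this x)]
    rw [Finset.sum_add_distrib, sum_const_c, ← Finset.mul_sum]
    rw [Finset.sum_comm]
    rw [Finset.sum_congr rfl (fun y (_ : y ∈ univ) => sum_x_D ε n f y)]
    simp
  · intro y u u' v
    rw [sum_x_Qb, sum_x_Qb]
  · intro x u v v'
    rw [sum_y_Qb, sum_y_Qb]

lemma Qb_decomp (x y u v : Fin n → Bool) :
    ∑ z : Bool, (1/2 : ℝ) * Qb ε n f z x y u v = PRn ε n x y u v := by
  rw [Fintype.sum_bool]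
  unfold Qb
  rw [show (if (false : Bool) = true then (1:ℝ) else -1) = -1 by norm_num]
  rw [show (if (true : Bool) = true then (1:ℝ) else -1) = 1 by norm_num]
  ring

end core


lemma sum_tb :
    ∑ y : Fin n → Bool, tb ε n f y
      = (∑ _x ∈ univ.filter (fun x => f x = false), ((1:ℝ)/2)^n)
        - ∑ _x ∈ univ.filter (fun x => f x = true), ((1:ℝ)/2)^n := by
  unfold tb
  rw [Finset.sum_sub_distrib]
  congr 1
  · unfold S0
    rw [Finset.sum_comm]
    exact Finset.sum_congr rfl fun x _ => prn_sum_y ε n x _ _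
  · unfold S1
    rw [Finset.sum_comm]
    exact Finset.sum_congr rfl fun x _ => prn_sum_y ε n x _ _

lemma biasD :
    (∑ x ∈ univ.filter (fun x => f x = false), ∑ y : Fin n → Bool, D ε n f x y)
      - (∑ x ∈ univ.filter (fun x => f x = true), ∑ y : Fin n → Bool, D ε n f x y)
      = ∑ y : Fin n → Bool, (((1:ℝ)/2)^n - |tb ε n f y|) := by
  rw [Finset.sum_comm, @Finset.sum_comm _ _ _ _ (univ.filter (fun x => f x = true))]
  rw [← Finset.sum_sub_distrib]
  apply Finset.sum_congr rfl
  intro y _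
  rw [sum_D_f0, sum_D_f1, coef_S0]
  have hs := S_sum ε n f y
  have he := eta_mul_c_sub_t ε n f y
  calc eta ε n f y * S0 ε n f y - eta ε n f y * tb ε n f y - -(eta ε n f y * S1 ε n f y)
      = eta ε n f y * ((S0 ε n f y + S1 ε n f y) - tb ε n f y) := by ring
    _ = eta ε n f y * ((1/2)^n - tb ε n f y) := by rw [hs]
    _ = (1/2)^n - |tb ε n f y| := he

lemma sum_c_split (h : (Fin n → Bool) → Bool) :
    (∑ _y ∈ univ.filter (fun y => h y = false), ((1:ℝ)/2)^n)
      + ∑ _y ∈ univ.filter (fun y => h y = true), ((1:ℝ)/2)^n = 1 := by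
  rw [← filter_not_false n h]
  rw [Finset.sum_filter_add_sum_filter_not univ (fun y => h y = false)
    (fun _ => ((1:ℝ)/2)^n)]
  exact sum_const_c n

lemma final_arith (Gb Fb B t1 t2 : ℝ) (hB : 0 ≤ B) (hGF : |Gb - Fb| ≤ B)
    (h1 : t1 - 1/2 = Gb/2) (h2 : t2 - 1/2 = Fb/2) :
    abs (|t1 - 1/2| - |t2 - 1/2|) ≤ 1/2 * (1/2 * |Fb + B| + 1/2 * |Fb - B|) := by
  rw [h1, h2]
  have hA : 2*|Fb| ≤ |Fb + B| + |Fb - B| := by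
    have e1 : (Fb + B) + (Fb - B) = 2*Fb := by ring
    have e2 : |2*Fb| = 2*|Fb| := by rw [abs_mul]; norm_num
    have := abs_add_le (Fb + B) (Fb - B)
    rw [e1, e2] at this
    exact this
  have hB2 : 2*B ≤ |Fb + B| + |Fb - B| := by
    have e1 : (Fb + B) - (Fb - B) = 2*B := by ring
    have e2 : |2*B| = 2*B := by rw [abs_of_nonneg (by linarith : (0:ℝ) ≤ 2*B)]
    have := abs_sub (Fb + B) (Fb - B)
    rw [e1, e2] at this
    exact this
  have h3 : |Gb| ≤ |Fb| + B := by
    have e1 : Fb + (Gb - Fb) = Gb := by ring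
    have := abs_add_le Fb (Gb - Fb)
    rw [e1] at this
    linarith
  have hg2 : |Gb/2| = |Gb|/2 := by rw [abs_div]; norm_num
  have hf2 : |Fb/2| = |Fb|/2 := by rw [abs_div]; norm_num
  rw [hg2, hf2]
  rcases abs_cases (|Gb|/2 - |Fb|/2) with ⟨he, _⟩ | ⟨he, _⟩ <;> rw [he] <;>
    [linarith [abs_nonneg Fb]; linarith [abs_nonneg Gb]]

end PRaux
end PRauxSec


/-- There exists a box partition `w` of the n-fold PR box with error ε whose
non-uniformity of `f(X)` at the all-zero inputs is at least `|δ_g - δ_f|`, where `δ_f`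
and `δ_g` are the distances from uniform of the bits `f(X)` and `g(Y)` and `g` is the
maximum-likelihood function of `f(X)` given `Y` at the all-zero inputs. -/

theorem nonuniformity_ge_bias_difference (ε : ℝ) (hε0 : 0 ≤ ε) (hε1 : ε ≤ 1/2)
    (n : ℕ) (f g : (Fin n → Bool) → Bool)
    (hg : ∀ y, g y =
      if (∑ x ∈ univ.filter (fun x => f x = true),
            PRn ε n x y (fun _ => false) (fun _ => false))
          ≤ ∑ x ∈ univ.filter (fun x => f x = false),
              PRn ε n x y (fun _ => false) (fun _ => false)
      then false else true) :
    ∃ (Z : Type) (iZ : Fintype Z) (p : Z → ℝ)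
      (Q : Z → (Fin n → Bool) → (Fin n → Bool) → (Fin n → Bool) → (Fin n → Bool) → ℝ),
      @IsBoxPartition _ _ _ _ Z _ _ iZ (PRn ε n) p Q ∧
      abs ((|(∑ y ∈ univ.filter (fun y => g y = false), ∑ x,
               PRn ε n x y (fun _ => false) (fun _ => false)) - 1/2|) -
           (|(∑ x ∈ univ.filter (fun x => f x = false), ∑ y,
               PRn ε n x y (fun _ => false) (fun _ => false)) - 1/2|))
        ≤ @nonUniformity n Z iZ p Q f (fun _ => false) (fun _ => false) := by
  classical
  refine ⟨Bool, inferInstance, (fun _ => (1/2:ℝ)), PRaux.Qb ε n f, ⟨?_, ?_, ?_, ?_⟩, ?_⟩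
  · intro z; norm_num
  · rw [Fintype.sum_bool]; norm_num
  · intro z; exact PRaux.Qb_isBox ε n f hε0 hε1 z
  · intro x y u v; exact PRaux.Qb_decomp ε n f x y u v
  · -- main inequality
    set S0' := PRaux.S0 ε n f with hS0'
    set S1' := PRaux.S1 ε n f with hS1'
    set c : ℝ := ((1:ℝ)/2)^n with hc
    have hTg : (∑ y ∈ univ.filter (fun y => g y = false),
        ∑ x, PRn ε n x y (fun _ => false) (fun _ => false))
        = ∑ _y ∈ univ.filter (fun y => g y = false), c :=
      Finset.sum_congr rfl fun y _ => PRaux.prn_sum_x ε n y _ _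
    have hTf : (∑ x ∈ univ.filter (fun x => f x = false),
        ∑ y, PRn ε n x y (fun _ => false) (fun _ => false))
        = ∑ _x ∈ univ.filter (fun x => f x = false), c :=
      Finset.sum_congr rfl fun x _ => PRaux.prn_sum_y ε n x _ _
    rw [hTg, hTf]
    set Gb : ℝ := (∑ _y ∈ univ.filter (fun y => g y = false), c)
      - ∑ _y ∈ univ.filter (fun y => g y = true), c with hGb
    set Fb : ℝ := (∑ _x ∈ univ.filter (fun x => f x = false), c)
      - ∑ _x ∈ univ.filter (fun x => f x = true), c with hFb
    set B : ℝ := ∑ y : Fin n → Bool, (c - |PRaux.tb ε n f y|) with hBdef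
    have hB0 : 0 ≤ B := by
      apply Finset.sum_nonneg
      intro y _
      have := PRaux.tb_abs_le ε n f hε0 hε1 y
      linarith
    have hGsplit := PRaux.sum_c_split n g
    have hFsplit := PRaux.sum_c_split n f
    -- |Gb - Fb| ≤ B
    have hGF : |Gb - Fb| ≤ B := by
      have hGb2 : Gb = ∑ y : Fin n → Bool, (if g y = false then c else -c) := by
        rw [Finset.sum_ite, PRaux.filter_not_false n g, Finset.sum_neg_distrib]
        rfl
      have hFb2 : Fb = ∑ y : Fin n → Bool, PRaux.tb ε n f y := (PRaux.sum_tb ε n f).symm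
      rw [hGb2, hFb2, ← Finset.sum_sub_distrib]
      calc |∑ y : Fin n → Bool, ((if g y = false then c else -c) - PRaux.tb ε n f y)|
          ≤ ∑ y : Fin n → Bool, |(if g y = false then c else -c) - PRaux.tb ε n f y| :=
            Finset.abs_sum_le_sum_abs _ _
        _ ≤ ∑ y : Fin n → Bool, (c - |PRaux.tb ε n f y|) := by
            apply Finset.sum_le_sum
            intro y _
            have hgy : g y = if S1' y ≤ S0' y then false else true := hg y
            have habs := PRaux.tb_abs_le ε n f hε0 hε1 y
            rw [abs_le] at habs
            by_cases hts : S1' y ≤ S0' y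
            · have hgyf : g y = false := by rw [hgy, if_pos hts]
              have ht : 0 ≤ PRaux.tb ε n f y := sub_nonneg.2 hts
              rw [if_pos hgyf, abs_of_nonneg ht,
                abs_of_nonneg (by linarith : (0:ℝ) ≤ c - PRaux.tb ε n f y)]
            · have hgyt : g y = true := by rw [hgy, if_neg hts]
              have hcond : ¬ (g y = false) := by rw [hgyt]; simp
              rw [if_neg hcond]
              have ht : PRaux.tb ε n f y < 0 := by
                have : ¬ (0 ≤ PRaux.tb ε n f y) := fun h => hts (sub_nonneg.1 h)
                linarith [lt_of_not_ge this]
              rw [abs_of_neg ht, abs_of_nonpos (by linarith : -c - PRaux.tb ε n f y ≤ 0)]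
              linarith
    -- compute nonUniformity
    have hbias : ∀ z : Bool,
        ((∑ x ∈ univ.filter (fun x => f x = false),
            ∑ y, PRaux.Qb ε n f z x y (fun _ => false) (fun _ => false))
          - ∑ x ∈ univ.filter (fun x => f x = true),
              ∑ y, PRaux.Qb ε n f z x y (fun _ => false) (fun _ => false))
        = Fb + (if z then 1 else -1) * B := by
      intro z
      have h0 : ∀ x, ∑ y, PRaux.Qb ε n f z x y (fun _ => false) (fun _ => false)
          = c + (if z then 1 else -1) * ∑ y : Fin n → Bool, PRaux.D ε n f x y :=
        fun x => PRaux.sum_y_Qb ε n f z x _ _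
      rw [Finset.sum_congr rfl (fun x _ => h0 x), Finset.sum_congr rfl (fun x _ => h0 x)]
      rw [Finset.sum_add_distrib, Finset.sum_add_distrib, ← Finset.mul_sum, ← Finset.mul_sum]
      have hBD := PRaux.biasD ε n f
      rw [← hBdef] at hBD
      cases z
      · rw [show (if (false : Bool) = true then (1:ℝ) else -1) = -1 by norm_num]
        linarith [hBD]
      · rw [show (if (true : Bool) = true then (1:ℝ) else -1) = 1 by norm_num]
        linarith [hBD]
    unfold nonUniformity
    rw [Fintype.sum_bool, hbias true, hbias false]
    rw [show (if (false : Bool) = true then (1:ℝ) else -1) = -1 by norm_num]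
    rw [show (if (true : Bool) = true then (1:ℝ) else -1) = 1 by norm_num]
    have hgoal := PRaux.final_arith Gb Fb B
      (∑ _y ∈ univ.filter (fun y => g y = false), c)
      (∑ _x ∈ univ.filter (fun x => f x = false), c)
      hB0 hGF (by rw [hGb]; linarith) (by rw [hFb]; linarith)
    calc abs (|(∑ _y ∈ univ.filter (fun y => g y = false), c) - 1/2|
          - |(∑ _x ∈ univ.filter (fun x => f x = false), c) - 1/2|)
        ≤ 1/2 * (1/2 * |Fb + B| + 1/2 * |Fb - B|) := hgoal
      _ = 1/2 * (1/2 * |Fb + 1 * B| + 1/2 * |Fb + -1 * B|) := by ring_nf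
end
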